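/- arXiv:2504.03448 — 5 statements merged into one kernel-verified Lean document; each statement's English description precedes it below -/
import Mathlib

section
/- In the snooker domination game on a finite connected graph G, if G admits a 3-involution (an order-two automorphism φ with dist(v, φ(v)) ≥ 3 for all v), then the second player has a winning strategy. -/
/-- `B` is a dominating set of `G`: every vertex is chosen or adjacent to a chosen vertex. -/
def IsDomSet {V : Type*} (G : SimpleGraph V) (B : Finset V) : Prop :=
  ∀ v : V, v ∈ B ∨ ∃ u ∈ B, G.Adj u v

/-- `NWinsAux G fuel B` : the player about to move from position `B` (set of chosen
vertices, assumed not yet dominating) has a winning strategy in the snooker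
domination game, computed with `fuel` remaining recursion depth.  Since each move
adds a vertex, `fuel = Fintype.card V` always suffices. -/
def NWinsAux {V : Type*} [DecidableEq V] (G : SimpleGraph V) : ℕ → Finset V → Prop
  | 0, _ => False
  | fuel + 1, B => ¬ IsDomSet G B ∧
      ∃ u, u ∉ B ∧ (IsDomSet G (insert u B) ∨ ¬ NWinsAux G fuel (insert u B))

/-- The first player (the player about to move from the empty position) has a
winning strategy in the snooker domination game on `G`. -/
def FirstPlayerWins {V : Type*} [Fintype V] [DecidableEq V] (G : SimpleGraph V) : Prop :=
  NWinsAux G (Fintype.card V) ∅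

lemma phi_ne {V : Type*} {G : SimpleGraph V} (φ : G ≃g G)
    (h3 : ∀ v, 3 ≤ G.dist v (φ v)) (v : V) : φ v ≠ v := by
  intro h
  have := h3 v
  rw [h, SimpleGraph.dist_self] at this
  omega

lemma dom_map {V : Type*} [DecidableEq V] {G : SimpleGraph V} (φ : G ≃g G)
    (hinv : Function.Involutive ⇑φ) {B : Finset V} (hB : ∀ v, v ∈ B ↔ φ v ∈ B) {u : V}
    (h : IsDomSet G (insert u B)) : IsDomSet G (insert (φ u) B) := by
  intro v
  rcases h (φ v) with hv | ⟨w, hw, hadj⟩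
  · rcases Finset.mem_insert.1 hv with h1 | h1
    · left
      have : v = φ u := by rw [← h1]; exact (hinv v).symm
      simp [this]
    · left
      exact Finset.mem_insert_of_mem ((hB v).2 h1)
  · right
    refine ⟨φ w, ?_, ?_⟩
    · rcases Finset.mem_insert.1 hw with h1 | h1
      · simp [h1]
      · exact Finset.mem_insert_of_mem ((hB w).1 h1)
    · have := φ.map_adj_iff.2 hadj
      rwa [hinv v] at this

lemma key {V : Type*} [DecidableEq V] {G : SimpleGraph V} (hconn : G.Connected)
    (φ : G ≃g G) (hinv : Function.Involutive ⇑φ) (h3 : ∀ v, 3 ≤ G.dist v (φ v))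
    {B : Finset V} (hB : ∀ v, v ∈ B ↔ φ v ∈ B) (hnd : ¬ IsDomSet G B)
    (u : V) : ¬ IsDomSet G (insert u B) := by
  intro h
  have h' := dom_map φ hinv hB h
  apply hnd
  intro v
  rcases h v with hv | ⟨w, hw, hadj⟩
  · rcases Finset.mem_insert.1 hv with h1 | h1
    · subst h1
      rcases h' v with hv' | ⟨w', hw', hadj'⟩
      · rcases Finset.mem_insert.1 hv' with h2 | h2
        · exact absurd h2.symm (phi_ne φ h3 v)
        · exact Or.inl h2
      · rcases Finset.mem_insert.1 hw' with h2 | h2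
        · exfalso
          subst h2
          have : G.dist v (φ v) = 1 := by
            rw [SimpleGraph.dist_eq_one_iff_adj]
            exact hadj'.symm
          have := h3 v
          omega
        · exact Or.inr ⟨w', h2, hadj'⟩
    · exact Or.inl h1
  · rcases Finset.mem_insert.1 hw with h1 | h1
    · subst h1
      rcases h' v with hv' | ⟨w', hw', hadj'⟩
      · rcases Finset.mem_insert.1 hv' with h2 | h2
        · exfalso
          subst h2
          have : G.dist w (φ w) = 1 := by
            rw [SimpleGraph.dist_eq_one_iff_adj]; exact hadj
          have := h3 w
          omega
        · exact Or.inl h2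
      · rcases Finset.mem_insert.1 hw' with h2 | h2
        · exfalso
          subst h2
          have d1 : G.dist w v ≤ 1 := by
            rw [← SimpleGraph.dist_eq_one_iff_adj] at hadj; omega
          have d2 : G.dist v (φ w) ≤ 1 := by
            have : G.Adj v (φ w) := hadj'.symm
            rw [← SimpleGraph.dist_eq_one_iff_adj] at this; omega
          have := hconn.dist_triangle (u := w) (v := v) (w := φ w)
          have := h3 w
          omega
        · exact Or.inr ⟨w', h2, hadj'⟩
    · exact Or.inr ⟨w, h1, hadj⟩

lemma main_lemma {V : Type*} [Fintype V] [DecidableEq V] {G : SimpleGraph V}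
    (hconn : G.Connected) (φ : G ≃g G) (hinv : Function.Involutive ⇑φ)
    (h3 : ∀ v, 3 ≤ G.dist v (φ v)) :
    ∀ fuel (B : Finset V), (∀ v, v ∈ B ↔ φ v ∈ B) →
    Fintype.card V ≤ fuel + B.card → ¬ NWinsAux G fuel B := by
  intro fuel
  induction fuel using Nat.strong_induction_on with
  | _ fuel ih =>
  match fuel with
  | 0 => intro B _ _ h; exact h
  | n + 1 =>
    rintro B hB hcard ⟨hnd, u, hu, hcase⟩
    have hnd' := key hconn φ hinv h3 hB hnd u
    have hne' : insert u B ≠ Finset.univ := by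
      intro h
      exact hnd' fun v => Or.inl (h ▸ Finset.mem_univ v)
    have hlt : (insert u B).card < Fintype.card V := by
      have := Finset.card_lt_card (Finset.ssubset_univ_iff.2 hne')
      simpa using this
    rw [Finset.card_insert_of_notMem hu] at hlt
    obtain ⟨m, rfl⟩ : ∃ m, n = m + 1 := ⟨n - 1, by omega⟩
    have hφu : φ u ∉ insert u B := by
      simp only [Finset.mem_insert, not_or]
      exact ⟨phi_ne φ h3 u, fun h => hu ((hB u).2 h)⟩
    have hwin : NWinsAux G (m + 1) (insert u B) := by
      refine ⟨hnd', φ u, hφu, ?_⟩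
      by_cases hdom : IsDomSet G (insert (φ u) (insert u B))
      · exact Or.inl hdom
      · right
        set B' := insert (φ u) (insert u B) with hB'def
        have hB'inv : ∀ v, v ∈ B' ↔ φ v ∈ B' := by
          intro v
          simp only [hB'def, Finset.mem_insert]
          constructor
          · rintro (h | h | h)
            · right; left; rw [h, hinv u]
            · left; rw [h]
            · right; right; exact (hB v).1 h
          · rintro (h | h | h)
            · right; left; rw [← hinv v, h, hinv u]
            · left; rw [← hinv v, h]
            · right; right; exact (hB v).2 h
        apply ih m (by omega) B' hB'inv
        have : B'.card = B.card + 2 := by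
          rw [hB'def, Finset.card_insert_of_notMem hφu,
            Finset.card_insert_of_notMem hu]
        omega
    exact (hcase.resolve_left hnd') hwin

/-- If a finite connected graph `G` admits a 3-involution, then the second player
has a winning strategy in the snooker domination game on `G`. -/
theorem secondPlayerWins_of_threeInvolution
    {V : Type*} [Fintype V] [DecidableEq V] (G : SimpleGraph V)
    (hconn : G.Connected) (φ : G ≃g G)
    (hinv : Function.Involutive ⇑φ) (hne : ⇑φ ≠ id)
    (h3 : ∀ v, 3 ≤ G.dist v (φ v)) :
    ¬ FirstPlayerWins G := by
  exact main_lemma hconn φ hinv h3 (Fintype.card V) ∅ (by simp) (by simp)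
end

section
/- For all d ≥ 3, the second player has a winning strategy in the snooker domination game on the d-dimensional hypercube Q_d. -/
/-- The `d`-dimensional hypercube graph on `{0,1}^d`: two vertices are adjacent
iff they differ in exactly one coordinate. -/
def cubeGraph (d : ℕ) : SimpleGraph (Fin d → Bool) where
  Adj x y := ∃! i, x i ≠ y i
  symm := by
    constructor
    rintro x y ⟨i, hi, hu⟩
    exact ⟨i, hi.symm, fun j hj => hu j hj.symm⟩
  loopless := by
    constructor
    rintro x ⟨i, hi, -⟩
    exact hi rfl

namespace SnookerCube

variable {d : ℕ}

/-- The antipodal map on the cube: flip all bits. -/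
def sig (x : Fin d → Bool) : Fin d → Bool := fun i => !(x i)

lemma sig_sig (x : Fin d → Bool) : sig (sig x) = x := by
  funext i; simp [sig]

lemma sig_ne (hd : 1 ≤ d) (x : Fin d → Bool) : sig x ≠ x := by
  intro h
  have := congrFun h ⟨0, hd⟩
  simp [sig] at this

lemma adj_sig {x y : Fin d → Bool} :
    (cubeGraph d).Adj (sig x) (sig y) ↔ (cubeGraph d).Adj x y := by
  show (∃! i, sig x i ≠ sig y i) ↔ (∃! i, x i ≠ y i)
  exact existsUnique_congr fun i => by simp [sig]

/-- `B` is closed under the antipodal map. -/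
def Closed (B : Finset (Fin d → Bool)) : Prop := ∀ x ∈ B, sig x ∈ B

lemma undom_sig {B : Finset (Fin d → Bool)} (hB : Closed B) {v : Fin d → Bool}
    (hv1 : v ∉ B) (hv2 : ∀ w ∈ B, ¬ (cubeGraph d).Adj w v) :
    sig v ∉ B ∧ ∀ w ∈ B, ¬ (cubeGraph d).Adj w (sig v) := by
  constructor
  · intro h
    have := hB _ h
    rw [sig_sig] at this
    exact hv1 this
  · intro w hw hadj
    have h2 : (cubeGraph d).Adj (sig w) (sig (sig v)) := adj_sig.mpr hadj
    rw [sig_sig] at h2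
    exact hv2 (sig w) (hB w hw) h2

lemma not_adj_sig (hd : 3 ≤ d) (v : Fin d → Bool) :
    ¬ (cubeGraph d).Adj v (sig v) := by
  rintro ⟨i, hi, hu⟩
  have h0 : (⟨0, by omega⟩ : Fin d) = i := hu _ (by simp [sig])
  have h1 : (⟨1, by omega⟩ : Fin d) = i := hu _ (by simp [sig])
  rw [← h1] at h0
  simp [Fin.ext_iff] at h0

lemma exists_third (hd : 3 ≤ d) (i j : Fin d) : ∃ k, k ≠ i ∧ k ≠ j := by
  have h2 : ({i, j} : Finset (Fin d)).card ≤ 2 := by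
    calc ({i, j} : Finset (Fin d)).card ≤ ({j} : Finset (Fin d)).card + 1 :=
          Finset.card_insert_le _ _
      _ = 2 := by simp
  have hss : ({i, j} : Finset (Fin d)) ⊂ Finset.univ := by
    rw [Finset.ssubset_univ_iff]
    intro h
    have hcard : Fintype.card (Fin d) ≤ 2 := by
      rw [← Finset.card_univ, ← h]; exact h2
    simp at hcard; omega
  obtain ⟨k, -, hk⟩ := Finset.exists_of_ssubset hss
  simp at hk
  exact ⟨k, hk.1, hk.2⟩

/-- Key lemma: from an antipodally closed, non-dominating position, no single
move can produce a dominating set (for `d ≥ 3`). -/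
lemma key (hd : 3 ≤ d) {B : Finset (Fin d → Bool)} (hB : Closed B)
    (hnd : ¬ IsDomSet (cubeGraph d) B) (u : Fin d → Bool) :
    ¬ IsDomSet (cubeGraph d) (insert u B) := by
  rw [IsDomSet] at hnd
  push_neg at hnd
  obtain ⟨v, hv1, hv2⟩ := hnd
  obtain ⟨hv1', hv2'⟩ := undom_sig hB hv1 hv2
  intro hdom
  have hA : v = u ∨ (cubeGraph d).Adj u v := by
    rcases hdom v with h | ⟨w, hw, hadj⟩
    · rcases Finset.mem_insert.mp h with h | h
      · exact Or.inl h
      · exact absurd h hv1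
    · rcases Finset.mem_insert.mp hw with h | h
      · exact Or.inr (h ▸ hadj)
      · exact absurd hadj (hv2 w h)
  have hC : sig v = u ∨ (cubeGraph d).Adj u (sig v) := by
    rcases hdom (sig v) with h | ⟨w, hw, hadj⟩
    · rcases Finset.mem_insert.mp h with h | h
      · exact Or.inl h
      · exact absurd h hv1'
    · rcases Finset.mem_insert.mp hw with h | h
      · exact Or.inr (h ▸ hadj)
      · exact absurd hadj (hv2' w h)
  rcases hA with rfl | hA
  · rcases hC with hC | hC
    · exact sig_ne (by omega) v hC
    · exact not_adj_sig hd v hC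
  · rcases hC with rfl | hC
    · exact not_adj_sig hd v ((cubeGraph d).adj_symm hA)
    · obtain ⟨i, hi, hiu⟩ := hA
      obtain ⟨j, hj, hju⟩ := hC
      obtain ⟨k, hki, hkj⟩ := exists_third hd i j
      have h1 : u k = v k := by
        by_contra h
        exact hki (hiu k h)
      have h2 : u k = sig v k := by
        by_contra h
        exact hkj (hju k h)
      rw [h1] at h2
      simp [sig] at h2

lemma noWin (hd : 3 ≤ d) :
    ∀ fuel (B : Finset (Fin d → Bool)), Closed B →
      Fintype.card (Fin d → Bool) ≤ B.card + fuel →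
      ¬ NWinsAux (cubeGraph d) fuel B := by
  intro fuel
  induction fuel using Nat.strong_induction_on with
  | _ fuel ih =>
    match fuel with
    | 0 =>
      intro B _ _ h
      exact h
    | fuel + 1 =>
      intro B hB hcard hwin
      rw [NWinsAux] at hwin
      obtain ⟨hnd, u, hu, hmove⟩ := hwin
      have hkey := key hd hB hnd u
      rcases hmove with hdom | hnw
      · exact hkey hdom
      · apply hnw
        have hne : insert u B ≠ Finset.univ := by
          intro h
          apply hkey
          rw [h]
          intro v
          exact Or.inl (Finset.mem_univ v)
        have hlt : (insert u B).card < Fintype.card (Fin d → Bool) := by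
          rw [← Finset.card_univ]
          exact Finset.card_lt_card (Finset.ssubset_univ_iff.mpr hne)
        have hcu : (insert u B).card = B.card + 1 := Finset.card_insert_of_notMem hu
        obtain ⟨m, rfl⟩ : ∃ m, fuel = m + 1 := ⟨fuel - 1, by omega⟩
        have hsu_ne : sig u ∉ insert u B := by
          intro h
          rcases Finset.mem_insert.mp h with h | h
          · exact sig_ne (by omega) u h
          · have := hB _ h
            rw [sig_sig] at this
            exact hu this
        rw [NWinsAux]
        refine ⟨hkey, sig u, hsu_ne, Or.inr ?_⟩
        have hC : Closed (insert (sig u) (insert u B)) := by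
          intro x hx
          rcases Finset.mem_insert.mp hx with rfl | hx
          · rw [sig_sig]
            exact Finset.mem_insert_of_mem (Finset.mem_insert_self _ _)
          · rcases Finset.mem_insert.mp hx with rfl | hx
            · exact Finset.mem_insert_self _ _
            · exact Finset.mem_insert_of_mem (Finset.mem_insert_of_mem (hB _ hx))
        apply ih m (by omega) _ hC
        have : (insert (sig u) (insert u B)).card = B.card + 2 := by
          rw [Finset.card_insert_of_notMem hsu_ne, hcu]
        omega

end SnookerCube

/-- For all `d ≥ 3`, the second player has a winning strategy in the snooker
domination game on the `d`-dimensional hypercube. -/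
theorem secondPlayerWins_cube (d : ℕ) (hd : 3 ≤ d) :
    ¬ FirstPlayerWins (cubeGraph d) := by
  apply SnookerCube.noWin hd
  · intro x hx
    simp at hx
  · simp
end

section
/- In the standard path-sum snooker domination game, the single standard path position P_k (path on k vertices with both endpoints shaded, interior white) is a P-position if and only if k is even and k ≠ 4. -/
/-- Number of white (interior, unshaded) vertices of a standard path component `P_n`. -/
def whiteCount (n : ℕ) : ℕ := n - 2

/-- Number of shaded vertices of a standard path component `P_n`
(`1` for `P_1`, `2` for `P_n` with `n ≥ 2`). -/
def shadedCount (n : ℕ) : ℕ := min n 2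

/-- Total number of white vertices of a standard path-sum position. -/
def totalWhite (Q : Multiset ℕ) : ℕ := (Q.map whiteCount).sum

/-- Total number of shaded vertices of a standard path-sum position. -/
def totalShaded (Q : Multiset ℕ) : ℕ := (Q.map shadedCount).sum

/-- The position resulting from deleting, in a component `P_n` of `Q`, the vertex
with `a` vertices on one side and `b` on the other (`a + b + 1 = n`): the component
is replaced by the standard paths `P_a` and `P_b` (empty parts discarded). -/
def moveResult (Q : Multiset ℕ) (_n a b : ℕ) : Multiset ℕ :=
  Multiset.filter (fun x => 0 < x) {a, b} + Q.erase _n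

/-- Next player wins the standard path-sum game from `Q`, with recursion depth
`fuel` (each move strictly decreases the total number of vertices, so
`fuel = Q.sum` suffices). The game ends, last mover winning, when no white
vertex remains. -/
def pathNPosAux : ℕ → Multiset ℕ → Prop
  | 0, _ => False
  | fuel + 1, Q => totalWhite Q ≠ 0 ∧ ∃ n a b, n ∈ Q ∧ a + b + 1 = n ∧
      (totalWhite (moveResult Q n a b) = 0 ∨ ¬ pathNPosAux fuel (moveResult Q n a b))

/-- `Q` is an N-position of the standard path-sum game: the player to move wins. -/
def pathNPos (Q : Multiset ℕ) : Prop := pathNPosAux Q.sum Q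

/-! Auxiliary theory -/

def bigs (Q : Multiset ℕ) : Multiset ℕ := Q.filter (fun x => 3 ≤ x)

def special (Q : Multiset ℕ) : Prop := bigs Q = {3} ∨ bigs Q = {4} ∨ bigs Q = {5}

def good (Q : Multiset ℕ) : Prop := bigs Q = 0 ∨ (Even Q.sum ∧ ¬ special Q)

lemma totalWhite_eq_zero_iff (Q : Multiset ℕ) : totalWhite Q = 0 ↔ bigs Q = 0 := by
  rw [totalWhite, Multiset.sum_eq_zero_iff, bigs, Multiset.filter_eq_nil]
  constructor
  · intro h a ha
    have := h _ (Multiset.mem_map_of_mem whiteCount ha)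
    simp only [whiteCount] at this; omega
  · intro h x hx
    obtain ⟨a, ha, rfl⟩ := Multiset.mem_map.1 hx
    have := h a ha; simp only [whiteCount]; omega

lemma sum_filter_pos (a b : ℕ) : (Multiset.filter (fun x => 0 < x) {a, b}).sum = a + b := by
  rcases Nat.eq_zero_or_pos a with rfl|ha <;> rcases Nat.eq_zero_or_pos b with rfl|hb <;>
    simp_all [Multiset.filter_cons, Multiset.filter_singleton]

lemma sum_moveResult {Q : Multiset ℕ} {n a b : ℕ} (hn : n ∈ Q) (hab : a + b + 1 = n) :
    (moveResult Q n a b).sum + 1 = Q.sum := by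
  have h1 : Q = n ::ₘ Q.erase n := (Multiset.cons_erase hn).symm
  rw [moveResult, Multiset.sum_add, sum_filter_pos]
  conv_rhs => rw [h1]
  rw [Multiset.sum_cons]; omega

lemma bigs_filter_pos (a b : ℕ) :
    bigs (Multiset.filter (fun x => 0 < x) {a, b}) = Multiset.filter (fun x => 3 ≤ x) {a, b} := by
  rw [bigs, Multiset.filter_filter]
  exact Multiset.filter_congr (fun x _ => by omega)

lemma bigs_moveResult {Q : Multiset ℕ} (n a b : ℕ) :
    bigs (moveResult Q n a b) = Multiset.filter (fun x => 3 ≤ x) {a, b} + bigs (Q.erase n) := by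
  rw [moveResult, bigs, Multiset.filter_add, ← bigs, ← bigs, bigs_filter_pos]

lemma bigs_cons_of_mem {Q : Multiset ℕ} {n : ℕ} (hn : n ∈ Q) :
    bigs Q = if 3 ≤ n then n ::ₘ bigs (Q.erase n) else bigs (Q.erase n) := by
  conv_lhs => rw [← Multiset.cons_erase hn]
  rw [bigs, Multiset.filter_cons, ← bigs]
  split
  · simp
  · simp

lemma not_special_of_card {Q : Multiset ℕ} (h : Multiset.card (bigs Q) ≠ 1) : ¬ special Q := by
  rintro (h1|h1|h1) <;> rw [h1] at h <;> simp at h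

lemma multiset_even_sum (s : Multiset ℕ) (h : ∀ x ∈ s, Even x) : Even s.sum := by
  induction s using Multiset.induction_on with
  | empty => simp
  | cons a s ih =>
    rw [Multiset.sum_cons]
    exact (h a (Multiset.mem_cons_self a s)).add (ih fun x hx => h x (Multiset.mem_cons_of_mem hx))

lemma exists_one_of_odd_small {Q : Multiset ℕ}
    (h : ¬ Even ((Q.filter (fun x => ¬ 3 ≤ x)).sum)) : 1 ∈ Q := by
  set s := Q.filter (fun x => ¬ 3 ≤ x) with hs
  have hodd : ∃ x ∈ s, ¬ Even x := by
    by_contra hc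
    push_neg at hc
    exact h (multiset_even_sum _ hc)
  obtain ⟨x, hx, hxo⟩ := hodd
  have hx' := Multiset.mem_filter.1 hx
  have : x = 1 := by
    rcases hx' with ⟨_, h3⟩
    rw [Nat.even_iff] at hxo; omega
  rw [this] at hx'
  exact hx'.1

lemma sum_split (Q : Multiset ℕ) :
    Q.sum = (bigs Q).sum + (Q.filter (fun x => ¬ 3 ≤ x)).sum := by
  conv_lhs => rw [← Multiset.filter_add_not (fun x => 3 ≤ x) Q]
  rw [Multiset.sum_add, bigs]

/-- every move from a good position with white vertices leads to a non-good position -/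
lemma moves_from_good {Q : Multiset ℕ} {n a b : ℕ} (hn : n ∈ Q) (hab : a + b + 1 = n)
    (hg : good Q) (hW : bigs Q ≠ 0) : ¬ good (moveResult Q n a b) := by
  rcases hg with h0 | ⟨hev, hns⟩
  · exact absurd h0 hW
  have hsum := sum_moveResult hn hab
  have hbR := bigs_moveResult (Q := Q) n a b
  -- the resulting sum is odd
  have hodd : ¬ Even (moveResult Q n a b).sum := by
    rw [Nat.even_iff] at hev ⊢; omega
  -- bigs of result is nonzero
  have hbig : bigs (moveResult Q n a b) ≠ 0 := by
    have hbc := bigs_cons_of_mem hn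
    by_cases h3 : 3 ≤ n
    · rw [if_pos h3] at hbc
      by_cases hT : bigs (Q.erase n) = 0
      · -- Q has a single big component, namely n, and n ≥ 6
        have hsingle : bigs Q = {n} := by rw [hbc, hT]; rfl
        have hn6 : 6 ≤ n := by
          by_contra hc
          apply hns
          interval_cases n <;> simp [special, hsingle]
        have h5 : 3 ≤ a ∨ 3 ≤ b := by omega
        intro hcon
        rw [hbR] at hcon
        have : Multiset.filter (fun x => 3 ≤ x) {a, b} = 0 := by
          have := congrArg Multiset.card hcon
          simp only [Multiset.card_add, Multiset.card_zero] at this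
          rw [← Multiset.card_eq_zero]; omega
        rw [Multiset.filter_eq_nil] at this
        rcases h5 with h5 | h5
        · exact this a (by simp) h5
        · exact this b (by simp) h5
      · intro hcon
        rw [hbR] at hcon
        apply hT
        have := congrArg Multiset.card hcon
        simp only [Multiset.card_add, Multiset.card_zero] at this
        rw [← Multiset.card_eq_zero]; omega
    · rw [if_neg h3] at hbc
      intro hcon
      rw [hbR] at hcon
      apply hW
      rw [hbc, ← Multiset.card_eq_zero]
      have := congrArg Multiset.card hcon
      simp only [Multiset.card_add, Multiset.card_zero] at this
      omega
  rintro (h0 | ⟨hev', -⟩)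
  · exact hbig h0
  · exact hodd hev'

/-- from a non-good position with white vertices, some move leads to a good position -/
lemma move_to_good {Q : Multiset ℕ} (hW : bigs Q ≠ 0) (hg : ¬ good Q) :
    ∃ n a b, n ∈ Q ∧ a + b + 1 = n ∧ good (moveResult Q n a b) := by
  rw [good, not_or, not_and_or, not_not] at hg
  obtain ⟨-, hg⟩ := hg
  by_cases hsp : special Q
  · -- single big component m ∈ {3,4,5}: kill it
    obtain ⟨m, hm5, hmQ⟩ : ∃ m, (3 ≤ m ∧ m ≤ 5) ∧ bigs Q = {m} := by
      rcases hsp with h|h|h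
      · exact ⟨3, by omega, h⟩
      · exact ⟨4, by omega, h⟩
      · exact ⟨5, by omega, h⟩
    have hmem : m ∈ Q ∧ 3 ≤ m := by
      have : m ∈ bigs Q := by rw [hmQ]; exact Multiset.mem_singleton_self m
      exact Multiset.mem_filter.1 this
    refine ⟨m, m / 2, m - 1 - m / 2, hmem.1, by omega, Or.inl ?_⟩
    rw [bigs_moveResult]
    have hbc := bigs_cons_of_mem hmem.1
    rw [if_pos hmem.2, hmQ] at hbc
    have hT : bigs (Q.erase m) = 0 := by
      have := congrArg Multiset.card hbc
      simp only [Multiset.card_singleton, Multiset.card_cons] at this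
      rw [← Multiset.card_eq_zero]; omega
    rw [hT, Multiset.filter_eq_nil.2 ?_]
    · rfl
    · intro x hx
      simp only [Multiset.insert_eq_cons, Multiset.mem_cons, Multiset.mem_singleton] at hx
      rcases hx with rfl | rfl <;> omega
  -- otherwise the sum is odd
  have hodd : ¬ Even Q.sum := by tauto
  have hcard : 1 ≤ Multiset.card (bigs Q) := by
    rw [Nat.one_le_iff_ne_zero, Ne, Multiset.card_eq_zero]; exact hW
  -- helper: the "pass" move on a component of size 1
  have pass : 1 ∈ Q → ∃ n a b, n ∈ Q ∧ a + b + 1 = n ∧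
      good (moveResult Q n a b) := by
    intro h1
    have hbR : bigs (moveResult Q 1 0 0) = bigs Q := by
      rw [bigs_moveResult]
      have hbc := bigs_cons_of_mem h1
      rw [if_neg (by omega)] at hbc
      have h00 : Multiset.filter (fun x => 3 ≤ x) ({0, 0} : Multiset ℕ) = 0 := by decide
      rw [h00, zero_add, ← hbc]
    refine ⟨1, 0, 0, h1, by omega, Or.inr ⟨?_, ?_⟩⟩
    · have := sum_moveResult (a := 0) (b := 0) h1 (by omega)
      rw [Nat.even_iff] at hodd ⊢; omega
    · intro hspR
      apply hsp
      unfold special at hspR ⊢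
      rwa [hbR] at hspR
  rcases Nat.lt_or_ge (Multiset.card (bigs Q)) 2 with hc2 | hc2
  · -- exactly one big component m, with m ≥ 6
    have hc1 : Multiset.card (bigs Q) = 1 := by omega
    obtain ⟨m, hmQ⟩ := Multiset.card_eq_one.1 hc1
    have hmem : m ∈ Q ∧ 3 ≤ m := by
      have : m ∈ bigs Q := by rw [hmQ]; exact Multiset.mem_singleton_self m
      exact Multiset.mem_filter.1 this
    have hm6 : 6 ≤ m := by
      by_contra hcon
      apply hsp
      have h3 := hmem.2
      interval_cases m <;> simp [special, hmQ]
    have hT : bigs (Q.erase m) = 0 := by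
      have hbc := bigs_cons_of_mem hmem.1
      rw [if_pos hmem.2, hmQ] at hbc
      have := congrArg Multiset.card hbc
      simp only [Multiset.card_singleton, Multiset.card_cons] at this
      rw [← Multiset.card_eq_zero]; omega
    rcases Nat.lt_or_ge m 7 with hm7 | hm7
    · -- m = 6 : must pass; a 1 exists by parity
      have h6 : m = 6 := by omega
      have hsm : ¬ Even ((Q.filter (fun x => ¬ 3 ≤ x)).sum) := by
        have hsplit := sum_split Q
        have : (bigs Q).sum = 6 := by rw [hmQ, h6]; rfl
        rw [Nat.even_iff] at hodd
        rw [Nat.even_iff]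
        omega
      exact pass (exists_one_of_odd_small hsm)
    · -- m ≥ 7 : split into 3 and m - 4
      refine ⟨m, 3, m - 4, hmem.1, by omega, Or.inr ⟨?_, ?_⟩⟩
      · have := sum_moveResult (a := 3) (b := m - 4) hmem.1 (by omega)
        rw [Nat.even_iff] at hodd ⊢; omega
      · apply not_special_of_card
        rw [bigs_moveResult, hT, add_zero]
        rw [Multiset.filter_eq_self.2 ?_]
        · simp
        · intro x hx
          simp only [Multiset.insert_eq_cons, Multiset.mem_cons, Multiset.mem_singleton] at hx
          rcases hx with rfl | rfl <;> omega
  · -- at least two big components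
    by_cases hall : ∀ x ∈ bigs Q, x = 3
    · by_cases hsm : Even ((Q.filter (fun x => ¬ 3 ≤ x)).sum)
      · -- all big components are 3, and there are an odd number ≥ 3 of them
        have hbsum : (bigs Q).sum = 3 * Multiset.card (bigs Q) := by
          rw [Multiset.eq_replicate_card.2 hall, Multiset.sum_replicate,
            Multiset.card_replicate, smul_eq_mul]
          ring
        have hcodd : Multiset.card (bigs Q) % 2 = 1 := by
          have hsplit := sum_split Q
          rw [Nat.even_iff] at hodd hsm
          omega
        have h3Q : (3 : ℕ) ∈ Q := by
          obtain ⟨x, hx⟩ := Multiset.card_pos_iff_exists_mem.1 (by omega : 0 < Multiset.card (bigs Q))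
          have hx3 := hall x hx
          subst hx3
          exact (Multiset.mem_filter.1 hx).1
        refine ⟨3, 1, 1, h3Q, by omega, Or.inr ⟨?_, ?_⟩⟩
        · have := sum_moveResult (a := 1) (b := 1) h3Q (by omega)
          rw [Nat.even_iff] at hodd ⊢; omega
        · apply not_special_of_card
          rw [bigs_moveResult]
          have hbc := bigs_cons_of_mem h3Q
          rw [if_pos (by omega)] at hbc
          have hf : Multiset.filter (fun x => 3 ≤ x) ({1, 1} : Multiset ℕ) = 0 := by decide
          rw [hf, zero_add]
          have := congrArg Multiset.card hbc
          simp only [Multiset.card_cons] at this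
          omega
      · exact pass (exists_one_of_odd_small hsm)
    · push_neg at hall
      obtain ⟨m, hm, hm3⟩ := hall
      have hmem : m ∈ Q ∧ 3 ≤ m := Multiset.mem_filter.1 hm
      have hm4 : 4 ≤ m := by omega
      refine ⟨m, m - 1, 0, hmem.1, by omega, Or.inr ⟨?_, ?_⟩⟩
      · have := sum_moveResult (a := m - 1) (b := 0) hmem.1 (by omega)
        rw [Nat.even_iff] at hodd ⊢; omega
      · apply not_special_of_card
        rw [bigs_moveResult]
        have hf : Multiset.filter (fun x => 3 ≤ x) ({m - 1, 0} : Multiset ℕ) = {m - 1} := by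
          rw [Multiset.insert_eq_cons, Multiset.filter_cons, Multiset.filter_singleton]
          rw [if_pos (by omega), if_neg (by omega)]
          rfl
        rw [hf]
        have hbc := bigs_cons_of_mem hmem.1
        rw [if_pos hmem.2] at hbc
        have hcc := congrArg Multiset.card hbc
        simp only [Multiset.card_cons] at hcc
        simp only [Multiset.card_add, Multiset.card_singleton]
        omega

lemma pathNPosAux_iff : ∀ (fuel : ℕ) (Q : Multiset ℕ), Q.sum ≤ fuel →
    (pathNPosAux fuel Q ↔ ¬ good Q) := by
  intro fuel
  induction fuel with
  | zero =>
    intro Q hQ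
    have hb : bigs Q = 0 := by
      rw [bigs, Multiset.filter_eq_nil]
      intro a ha
      have : a ≤ Q.sum := Multiset.single_le_sum (fun x _ => Nat.zero_le x) a ha
      omega
    simp only [pathNPosAux, false_iff, not_not]
    exact Or.inl hb
  | succ fuel ih =>
    intro Q hQ
    show (totalWhite Q ≠ 0 ∧ _) ↔ _
    by_cases hW : totalWhite Q = 0
    · simp only [hW, ne_eq, not_true_eq_false, false_and, false_iff, not_not]
      exact Or.inl ((totalWhite_eq_zero_iff Q).1 hW)
    · have hWb : bigs Q ≠ 0 := fun h => hW ((totalWhite_eq_zero_iff Q).2 h)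
      constructor
      · rintro ⟨-, n, a, b, hn, hab, hres⟩ hgood
        have hsum := sum_moveResult hn hab
        have hle : (moveResult Q n a b).sum ≤ fuel := by omega
        have hR : good (moveResult Q n a b) := by
          rcases hres with h0 | hnp
          · exact Or.inl ((totalWhite_eq_zero_iff _).1 h0)
          · exact not_not.1 (fun h => hnp ((ih _ hle).2 h))
        exact moves_from_good hn hab hgood hWb hR
      · intro hgood
        obtain ⟨n, a, b, hn, hab, hres⟩ := move_to_good hWb hgood
        have hsum := sum_moveResult hn hab
        have hle : (moveResult Q n a b).sum ≤ fuel := by omega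
        exact ⟨hW, n, a, b, hn, hab, Or.inr (fun h => ((ih _ hle).1 h) hres)⟩

/-- The single standard path `P_k` (`k ≥ 2`) is a P-position of the standard
path-sum game iff `k` is even and `k ≠ 4`. -/
theorem pathSum_single_path (k : ℕ) (hk : 2 ≤ k) :
    ¬ pathNPos {k} ↔ (Even k ∧ k ≠ 4) := by
  rw [pathNPos, pathNPosAux_iff _ _ le_rfl, not_not]
  have hsum : ({k} : Multiset ℕ).sum = k := by simp
  by_cases h3 : 3 ≤ k
  · have hb : bigs {k} = {k} := by
      rw [bigs, Multiset.filter_singleton, if_pos h3]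
    constructor
    · rintro (h0 | ⟨hev, hns⟩)
      · rw [hb] at h0; exact absurd h0 (by simp)
      · rw [hsum] at hev
        refine ⟨hev, ?_⟩
        rintro rfl
        exact hns (Or.inr (Or.inl (by rw [hb])))
    · rintro ⟨hev, h4⟩
      refine Or.inr ⟨by rwa [hsum], ?_⟩
      rw [Nat.even_iff] at hev
      rintro (h | h | h) <;> rw [hb, Multiset.singleton_inj] at h <;> omega
  · have h2 : k = 2 := by omega
    subst h2
    constructor
    · intro _; exact ⟨by decide, by decide⟩
    · intro _
      exact Or.inl (by decide)
end

section
/- For n ≥ 3, the first player has a winning strategy in the snooker domination game on the cycle C_n if and only if n is odd and n ≠ 5. -/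
namespace CycleSnooker
open Fin.CommRing
variable {m : ℕ}

def Dom (B : Finset (Fin (m+3))) (v : Fin (m+3)) : Prop :=
  v ∈ B ∨ v - 1 ∈ B ∨ v + 1 ∈ B

instance (B : Finset (Fin (m+3))) : DecidablePred (Dom B) := fun v => by
  unfold Dom; infer_instance

def Win (w v : Fin (m+3)) : Prop := v = w - 1 ∨ v = w ∨ v = w + 1

lemma win_self (w : Fin (m+3)) : Win w w := Or.inr (Or.inl rfl)

lemma fin_cast_inj {i j : ℕ} (hi : i < m+3) (hj : j < m+3)
    (h : (i : Fin (m+3)) = j) : i = j := by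
  have := congrArg Fin.val h
  rwa [Fin.val_cast_of_lt hi, Fin.val_cast_of_lt hj] at this

lemma nc_ne {i j : ℕ} (hi : i < m+3) (hj : j < m+3) (hij : i ≠ j) :
    (i : Fin (m+3)) ≠ (j : Fin (m+3)) := fun h => hij (fin_cast_inj hi hj h)

lemma isDomSet_iff (B : Finset (Fin (m+3))) :
    IsDomSet (SimpleGraph.cycleGraph (m+3)) B ↔ ∀ v, Dom B v := by
  refine forall_congr' fun v => ?_
  have : (∃ u ∈ B, (SimpleGraph.cycleGraph (m+3)).Adj u v) ↔ (v - 1 ∈ B ∨ v + 1 ∈ B) := by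
    constructor
    · rintro ⟨u, hu, hadj⟩
      rcases SimpleGraph.cycleGraph_adj.mp hadj with h | h
      · right; rwa [show u = v + 1 by linear_combination h] at hu
      · left; rwa [show u = v - 1 by linear_combination -h] at hu
    · rintro (h | h)
      · exact ⟨v - 1, h, SimpleGraph.cycleGraph_adj.mpr (Or.inr (by ring))⟩
      · exact ⟨v + 1, h, SimpleGraph.cycleGraph_adj.mpr (Or.inl (by ring))⟩
  unfold Dom
  rw [this]

lemma dom_insert (B : Finset (Fin (m+3))) (u v : Fin (m+3)) :
    Dom (insert u B) v ↔ Dom B v ∨ Win u v := by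
  have h1 : v - 1 = u ↔ v = u + 1 := sub_eq_iff_eq_add
  have h2 : v + 1 = u ↔ v = u - 1 := by rw [eq_sub_iff_add_eq]
  simp only [Dom, Win, Finset.mem_insert]
  tauto

lemma not_mem_of_undom {B : Finset (Fin (m+3))} {v : Fin (m+3)} (h : ¬ Dom B v) : v ∉ B :=
  fun hv => h (Or.inl hv)

lemma F0r {B : Finset (Fin (m+3))} {v : Fin (m+3)} (h : ¬ Dom B v) (h1 : Dom B (v+1)) :
    v + 1 ∉ B ∧ v + 1 + 1 ∈ B := by
  have hv1 : v + 1 ∉ B := fun hm => h (Or.inr (Or.inr hm))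
  rcases h1 with h' | h' | h'
  · exact absurd h' hv1
  · rw [add_sub_cancel_right] at h'; exact absurd (Or.inl h') h
  · exact ⟨hv1, h'⟩

lemma F0l {B : Finset (Fin (m+3))} {v : Fin (m+3)} (h : ¬ Dom B v) (h1 : Dom B (v-1)) :
    v - 1 ∉ B ∧ v - 1 - 1 ∈ B := by
  have hv1 : v - 1 ∉ B := fun hm => h (Or.inr (Or.inl hm))
  rcases h1 with h' | h' | h'
  · exact absurd h' hv1
  · exact ⟨hv1, h'⟩
  · rw [sub_add_cancel] at h'; exact absurd (Or.inl h') h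

-- boundary existence

lemma cast_pred {r : ℕ} (hr : 1 ≤ r) :
    ((r:ℕ) : Fin (m+3)) = ((r-1:ℕ) : Fin (m+3)) + 1 := by
  rw [← Nat.cast_add_one]; congr 1; omega

lemma cast_last : ((m+2 : ℕ) : Fin (m+3)) = -1 := by
  have h : ((m+2 : ℕ) : Fin (m+3)) + 1 = ((m+3 : ℕ) : Fin (m+3)) := by push_cast; ring
  rw [Fin.natCast_self] at h
  linear_combination h

lemma case2 (B : Finset (Fin (m+3))) (hB : B.Nonempty) (hU : Odd (m+3 - B.card))
    (hnw : ¬ ∃ w, ∀ v, ¬ Dom B v → Win w v)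
    (hstep2 : ∀ u, u ∉ B → ∃ v, ¬ Dom B v ∧ Win u v)
    (a : Fin (m+3)) (r : ℕ) (ha : ¬ Dom B a) (ha1 : Dom B (a-1))
    (hrun : ∀ j, j < r → ¬ Dom B (a + (j : Fin (m+3))))
    (hrend : Dom B (a + (r : Fin (m+3))))
    (hcov : ∀ v, ¬ Dom B v → ∃ j, j < r ∧ v = a + (j : Fin (m+3))) :
    ∃ u, u ∉ B ∧ ∀ w, ∃ v, ¬ Dom B v ∧ ¬ Win u v ∧ ¬ Win w v := by
  have hr1 : 1 ≤ r := by
    by_contra h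
    have : r = 0 := by omega
    rw [this] at hrend
    simp only [Nat.cast_zero, add_zero] at hrend
    exact ha hrend
  have ha1B : a - 1 ∉ B := (F0l ha ha1).1
  -- end of run facts
  have hrcast : (a + ((r-1:ℕ) : Fin (m+3))) + 1 = a + (r : Fin (m+3)) := by
    have : ((r-1:ℕ) : Fin (m+3)) + 1 = (r : Fin (m+3)) := by
      rw [← Nat.cast_add_one]; congr 1; omega
    rw [add_assoc, this]
  have hendB : a + (r : Fin (m+3)) ∉ B ∧ a + (r : Fin (m+3)) + 1 ∈ B := by
    have := F0r (hrun (r-1) (by omega)) (by rw [hrcast]; exact hrend)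
    rwa [hrcast] at this
  -- n ≥ r + 3
  have hrm : r ≤ m := by
    by_contra hc
    push_neg at hc
    obtain ⟨b, hb⟩ := hB
    set j := (b - (a - 1)).val with hj
    have hjb : b = a - 1 + (j : Fin (m+3)) := by
      rw [hj, Fin.cast_val_eq_self]; ring
    have hjlt : j < m + 3 := (b - (a-1)).isLt
    have hcases : j = 0 ∨ (1 ≤ j ∧ j ≤ r) ∨ j = r + 1 := by omega
    have hshift : ∀ i : ℕ, 1 ≤ i → a - 1 + (i : Fin (m+3)) = a + ((i-1 : ℕ) : Fin (m+3)) := by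
      intro i hi
      have : (i : Fin (m+3)) = ((i-1:ℕ) : Fin (m+3)) + 1 := by
        rw [← Nat.cast_add_one]; congr 1; omega
      rw [this]; ring
    rcases hcases with h0 | ⟨h1, h2⟩ | h3
    · rw [h0] at hjb; simp only [Nat.cast_zero, add_zero] at hjb
      exact ha1B (hjb ▸ hb)
    · rw [hshift j h1] at hjb
      exact not_mem_of_undom (hrun (j-1) (by omega)) (hjb ▸ hb)
    · rw [h3, hshift (r+1) (by omega)] at hjb
      simp only [Nat.add_sub_cancel] at hjb
      exact hendB.1 (hjb ▸ hb)
  -- r ≥ 4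
  have hr4 : 4 ≤ r := by
    by_contra hc
    push_neg at hc
    apply hnw
    refine ⟨a + 1, fun v hv => ?_⟩
    obtain ⟨j, hj, rfl⟩ := hcov v hv
    have hj3 : j = 0 ∨ j = 1 ∨ j = 2 := by omega
    rcases hj3 with rfl | rfl | rfl
    · left; push_cast; ring
    · right; left; push_cast; ring
    · right; right; push_cast; ring
  -- cardinality of the complement
  have hcompl : Bᶜ = (Finset.range (r+2)).image (fun j : ℕ => a - 1 + (j : Fin (m+3))) := by
    apply Finset.ext
    intro u
    simp only [Finset.mem_compl, Finset.mem_image, Finset.mem_range]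
    constructor
    · intro huB
      obtain ⟨v, hv, hwin⟩ := hstep2 u huB
      obtain ⟨j, hj, rfl⟩ := hcov v hv
      rcases hwin with h | h | h
      · refine ⟨j+2, by omega, ?_⟩
        push_cast
        linear_combination h
      · refine ⟨j+1, by omega, ?_⟩
        push_cast
        linear_combination h
      · exact ⟨j, by omega, by linear_combination h⟩
    · rintro ⟨j, hj, rfl⟩
      have hcases : j = 0 ∨ (1 ≤ j ∧ j ≤ r) ∨ j = r + 1 := by omega
      have hshift : ∀ i : ℕ, 1 ≤ i → a - 1 + (i : Fin (m+3)) = a + ((i-1 : ℕ) : Fin (m+3)) := by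
        intro i hi
        have : (i : Fin (m+3)) = ((i-1:ℕ) : Fin (m+3)) + 1 := by
          rw [← Nat.cast_add_one]; congr 1; omega
        rw [this]; ring
      rcases hcases with rfl | ⟨h1, h2⟩ | rfl
      · simpa using ha1B
      · rw [hshift j h1]
        exact not_mem_of_undom (hrun (j-1) (by omega))
      · rw [hshift (r+1) (by omega)]
        simpa using hendB.1
  have hcard : m + 3 - B.card = r + 2 := by
    have h1 : Bᶜ.card = m + 3 - B.card := by
      rw [Finset.card_compl, Fintype.card_fin]
    rw [← h1, hcompl, Finset.card_image_of_injOn, Finset.card_range]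
    intro i hi j hj hij
    simp only [Finset.coe_range, Set.mem_Iio, Finset.mem_coe, Finset.mem_range] at hi hj
    have : (i : Fin (m+3)) = (j : Fin (m+3)) := by
      have := hij
      simpa [add_right_inj] using this
    exact fin_cast_inj (by omega) (by omega) this
  have hr5 : 5 ≤ r := by
    rw [hcard] at hU
    obtain ⟨k, hk⟩ := hU
    omega
  have hm5 : 5 ≤ m := le_trans hr5 hrm
  -- the winning move u = a + 2
  refine ⟨a + ((2:ℕ) : Fin (m+3)), not_mem_of_undom (hrun 2 (by omega)), fun w => ?_⟩
  by_cases hwa : Win w a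
  · refine ⟨a + ((4:ℕ) : Fin (m+3)), hrun 4 (by omega), ?_, ?_⟩
    · rintro (h | h | h)
      · exact nc_ne (m := m) (i := 4) (j := 1) (by omega) (by omega) (by omega)
          (by push_cast at h ⊢; linear_combination h)
      · exact nc_ne (m := m) (i := 4) (j := 2) (by omega) (by omega) (by omega)
          (by push_cast at h ⊢; linear_combination h)
      · exact nc_ne (m := m) (i := 4) (j := 3) (by omega) (by omega) (by omega)
          (by push_cast at h ⊢; linear_combination h)
    · rintro (h | h | h) <;> rcases hwa with h' | h' | h'
      · exact nc_ne (m := m) (i := 4) (j := 0) (by omega) (by omega) (by omega)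
          (by push_cast at h h' ⊢; linear_combination h - h')
      · exact nc_ne (m := m) (i := 5) (j := 0) (by omega) (by omega) (by omega)
          (by push_cast at h h' ⊢; linear_combination h - h')
      · exact nc_ne (m := m) (i := 6) (j := 0) (by omega) (by omega) (by omega)
          (by push_cast at h h' ⊢; linear_combination h - h')
      · exact nc_ne (m := m) (i := 4) (j := 1) (by omega) (by omega) (by omega)
          (by push_cast at h h' ⊢; linear_combination h - h')
      · exact nc_ne (m := m) (i := 4) (j := 0) (by omega) (by omega) (by omega)
          (by push_cast at h h' ⊢; linear_combination h - h')
      · exact nc_ne (m := m) (i := 5) (j := 0) (by omega) (by omega) (by omega)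
          (by push_cast at h h' ⊢; linear_combination h - h')
      · exact nc_ne (m := m) (i := 4) (j := 2) (by omega) (by omega) (by omega)
          (by push_cast at h h' ⊢; linear_combination h - h')
      · exact nc_ne (m := m) (i := 4) (j := 1) (by omega) (by omega) (by omega)
          (by push_cast at h h' ⊢; linear_combination h - h')
      · exact nc_ne (m := m) (i := 4) (j := 0) (by omega) (by omega) (by omega)
          (by push_cast at h h' ⊢; linear_combination h - h')
  · refine ⟨a, ha, ?_, hwa⟩
    rintro (h | h | h)
    · exact nc_ne (m := m) (i := 1) (j := 0) (by omega) (by omega) (by omega)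
        (by push_cast at h ⊢; linear_combination -h)
    · exact nc_ne (m := m) (i := 2) (j := 0) (by omega) (by omega) (by omega)
        (by push_cast at h ⊢; linear_combination -h)
    · exact nc_ne (m := m) (i := 3) (j := 0) (by omega) (by omega) (by omega)
        (by push_cast at h ⊢; linear_combination -h)

lemma case1b (B : Finset (Fin (m+3))) (hU : Odd (m+3 - B.card))
    (hnw : ¬ ∃ w, ∀ v, ¬ Dom B v → Win w v)
    (hstep2 : ∀ u, u ∉ B → ∃ v, ¬ Dom B v ∧ Win u v)
    (hall1 : ∀ v, ¬ Dom B v → Dom B (v + 1)) :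
    ∃ u, u ∉ B ∧ ∀ w, ∃ v, ¬ Dom B v ∧ ¬ Win u v ∧ ¬ Win w v := by
  push_neg at hnw
  have hex : ∃ v, ¬ Dom B v := by
    obtain ⟨v, hv, -⟩ := hnw 0
    exact ⟨v, hv⟩
  obtain ⟨v₀, hv₀⟩ := hex
  have hdn : ∀ v, ¬ Dom B v → Dom B (v - 1) := by
    intro v hv
    by_contra h
    have := hall1 (v-1) h
    rw [sub_add_cancel] at this
    exact hv this
  -- the undominated set
  set Dset := Finset.univ.filter (fun v => ¬ Dom B v) with hDdef
  have hmem : ∀ v, v ∈ Dset ↔ ¬ Dom B v := by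
    intro v; simp [hDdef]
  have hcompl : Bᶜ = Dset ∪ Dset.image (· + 1) ∪ Dset.image (· - 1) := by
    apply Finset.ext
    intro u
    simp only [Finset.mem_compl, Finset.mem_union, Finset.mem_image]
    constructor
    · intro huB
      obtain ⟨v, hv, hwin⟩ := hstep2 u huB
      rcases hwin with h | h | h
      · exact Or.inl (Or.inr ⟨v, (hmem v).mpr hv, by linear_combination h⟩)
      · exact Or.inl (Or.inl ((hmem u).mpr (h ▸ hv)))
      · exact Or.inr ⟨v, (hmem v).mpr hv, by linear_combination h⟩
    · rintro ((h | ⟨v, hv, rfl⟩) | ⟨v, hv, rfl⟩)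
      · exact not_mem_of_undom ((hmem u).mp h)
      · exact (F0r ((hmem v).mp hv) (hall1 v ((hmem v).mp hv))).1
      · exact (F0l ((hmem v).mp hv) (hdn v ((hmem v).mp hv))).1
  have hd1 : Disjoint Dset (Dset.image (· + 1)) := by
    rw [Finset.disjoint_left]
    intro x hx hx2
    obtain ⟨d, hd, hde⟩ := Finset.mem_image.mp hx2
    subst hde
    exact ((hmem _).mp hx) (hall1 d ((hmem d).mp hd))
  have hd2 : Disjoint (Dset ∪ Dset.image (· + 1)) (Dset.image (· - 1)) := by
    rw [Finset.disjoint_left]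
    intro x hx hx2
    obtain ⟨d, hd, hde⟩ := Finset.mem_image.mp hx2
    subst hde
    rcases Finset.mem_union.mp hx with h | h
    · exact ((hmem _).mp h) (hdn d ((hmem d).mp hd))
    · obtain ⟨e, he, hde⟩ := Finset.mem_image.mp h
      have hd2' : d = e + 1 + 1 := by linear_combination -hde
      have : e + 1 + 1 ∈ B := (F0r ((hmem e).mp he) (hall1 e ((hmem e).mp he))).2
      exact not_mem_of_undom ((hmem d).mp hd) (hd2' ▸ this)
  have hinj1 : Function.Injective (fun v : Fin (m+3) => v + 1) := fun x y h => by
    simpa using h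
  have hinj2 : Function.Injective (fun v : Fin (m+3) => v - 1) := fun x y h => by
    simpa [sub_eq_iff_eq_add] using h
  have hcard : m + 3 - B.card = 3 * Dset.card := by
    have h1 : Bᶜ.card = m + 3 - B.card := by
      rw [Finset.card_compl, Fintype.card_fin]
    rw [← h1, hcompl, Finset.card_union_of_disjoint hd2,
      Finset.card_union_of_disjoint hd1, Finset.card_image_of_injective _ hinj1,
      Finset.card_image_of_injective _ hinj2]
    ring
  have hoddD : Odd Dset.card := by
    rw [hcard] at hU
    rcases Nat.odd_mul.mp hU with ⟨-, h⟩
    exact h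
  have hD2 : 1 < Dset.card := by
    obtain ⟨v₁, hv₁, hnw₁⟩ := hnw v₀
    have hne : v₁ ≠ v₀ := fun h => hnw₁ (h ▸ win_self v₀)
    exact Finset.one_lt_card.mpr ⟨v₁, (hmem _).mpr hv₁, v₀, (hmem _).mpr hv₀, hne⟩
  have hD3 : 3 ≤ Dset.card := by
    obtain ⟨k, hk⟩ := hoddD
    omega
  refine ⟨v₀, not_mem_of_undom hv₀, fun w => ?_⟩
  have herase : 1 < (Dset.erase v₀).card := by
    have := Finset.card_erase_of_mem ((hmem _).mpr hv₀)
    omega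
  obtain ⟨x, hxm, y, hym, hxy⟩ := Finset.one_lt_card.mp herase
  have hx : ¬ Dom B x := (hmem _).mp (Finset.mem_of_mem_erase hxm)
  have hy : ¬ Dom B y := (hmem _).mp (Finset.mem_of_mem_erase hym)
  have hnWv₀ : ∀ z, z ∈ Dset.erase v₀ → ¬ Win v₀ z := by
    intro z hz hwin
    have hzD : ¬ Dom B z := (hmem _).mp (Finset.mem_of_mem_erase hz)
    rcases hwin with h | h | h
    · exact hzD (h ▸ hdn v₀ hv₀)
    · exact (Finset.ne_of_mem_erase hz) h
    · exact hzD (h ▸ hall1 v₀ hv₀)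
  have hkey : ¬ Win w x ∨ ¬ Win w y := by
    by_contra hc
    push_neg at hc
    obtain ⟨hwx, hwy⟩ := hc
    have hplus : ∀ p q : Fin (m+3), ¬ Dom B p → ¬ Dom B q → p ≠ q →
        q ≠ p + 1 ∧ q ≠ p + 1 + 1 := by
      intro p q hp hq hpq
      constructor
      · intro h; exact hq (h ▸ hall1 p hp)
      · intro h
        exact not_mem_of_undom hq (h ▸ (F0r hp (hall1 p hp)).2)
    rcases hwx with h1 | h1 | h1 <;> rcases hwy with h2 | h2 | h2
    · exact hxy (by linear_combination h1 - h2)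
    · exact (hplus x y hx hy hxy).1 (by linear_combination h2 - h1)
    · exact (hplus x y hx hy hxy).2 (by linear_combination h2 - h1)
    · exact (hplus y x hy hx hxy.symm).1 (by linear_combination h1 - h2)
    · exact hxy (by linear_combination h1 - h2)
    · exact (hplus x y hx hy hxy).1 (by linear_combination h2 - h1)
    · exact (hplus y x hy hx hxy.symm).2 (by linear_combination h1 - h2)
    · exact (hplus y x hy hx hxy.symm).1 (by linear_combination h1 - h2)
    · exact hxy (by linear_combination h1 - h2)
  rcases hkey with h | h
  · exact ⟨x, hx, hnWv₀ x hxm, h⟩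
  · exact ⟨y, hy, hnWv₀ y hym, h⟩

lemma case1a (B : Finset (Fin (m+3))) (hB : B.Nonempty)
    (y : Fin (m+3)) (hy1 : ¬ Dom B y) (hy2 : ¬ Dom B (y+1))
    (hns : ∀ (a : Fin (m+3)) (r : ℕ), ¬ Dom B a → Dom B (a-1) →
      (∀ j, j < r → ¬ Dom B (a + (j : Fin (m+3)))) → Dom B (a + (r : Fin (m+3))) →
      ∃ x, ¬ Dom B x ∧ ∀ j, j < r → x ≠ a + (j : Fin (m+3))) :
    ∃ u, u ∉ B ∧ ∀ w, ∃ v, ¬ Dom B v ∧ ¬ Win u v ∧ ¬ Win w v := by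
  classical
  obtain ⟨b, hb⟩ := hB
  have hDomb : Dom B b := Or.inl hb
  -- leftward search for the start of the run containing y
  have hexL : ∃ j : ℕ, Dom B (y - (j : Fin (m+3))) :=
    ⟨(y - b).val, by rwa [Fin.cast_val_eq_self, sub_sub_cancel]⟩
  set t := Nat.find hexL with ht
  have htspec : Dom B (y - (t : Fin (m+3))) := Nat.find_spec hexL
  have ht1 : 1 ≤ t := by
    rcases Nat.eq_zero_or_pos t with h0 | h
    · rw [h0] at htspec; simp only [Nat.cast_zero, sub_zero] at htspec
      exact absurd htspec hy1
    · exact h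
  have htmin : ∀ j, j < t → ¬ Dom B (y - (j : Fin (m+3))) := fun j hj => Nat.find_min hexL hj
  set a := y - ((t-1 : ℕ) : Fin (m+3)) with hadef
  have hba : ¬ Dom B a := htmin (t-1) (by omega)
  have ha1 : Dom B (a - 1) := by
    have : a - 1 = y - (t : Fin (m+3)) := by
      rw [hadef, cast_pred ht1]; ring
    rwa [this]
  -- rightward: run length
  have hexR : ∃ j : ℕ, Dom B (a + (j : Fin (m+3))) :=
    ⟨(b - a).val, by rwa [Fin.cast_val_eq_self, add_sub_cancel]⟩
  set r := Nat.find hexR with hr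
  have hrend : Dom B (a + (r : Fin (m+3))) := Nat.find_spec hexR
  have hrun : ∀ j, j < r → ¬ Dom B (a + (j : Fin (m+3))) := fun j hj => Nat.find_min hexR hj
  have hr2 : 2 ≤ r := by
    have h0 : ¬ Dom B (a + ((0:ℕ) : Fin (m+3))) := by
      simpa using hba
    have h1 : ¬ Dom B (a + ((1:ℕ) : Fin (m+3))) := by
      rcases Nat.lt_or_ge 1 t with h | h
      · have := htmin (t-2) (by omega)
        have heq : a + ((1:ℕ) : Fin (m+3)) = y - ((t-2 : ℕ) : Fin (m+3)) := by
          rw [hadef]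
          have : ((t-1:ℕ) : Fin (m+3)) = ((t-2:ℕ) : Fin (m+3)) + 1 := by
            rw [← Nat.cast_add_one]; congr 1; omega
          rw [this]; push_cast; ring
        rwa [heq]
      · have ht1' : t = 1 := by omega
        have heq : a + ((1:ℕ) : Fin (m+3)) = y + 1 := by
          rw [hadef, ht1']; push_cast; ring
        rwa [heq]
    rcases Nat.lt_or_ge r 2 with h | h
    · interval_cases r
      · exact absurd hrend h0
      · exact absurd hrend h1
    · exact h
  -- the outside element
  obtain ⟨x, hx, hxr⟩ := hns a r hba ha1 hrun hrend
  set j := (x - a).val with hjdef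
  have hxj : x = a + (j : Fin (m+3)) := by
    rw [hjdef, Fin.cast_val_eq_self]; ring
  have hjlt : j < m + 3 := (x - a).isLt
  have hjr : r ≤ j := by
    by_contra h
    exact hxr j (by omega) hxj
  have hjm : j ≤ m + 1 := by
    by_contra h
    have hj2 : j = m + 2 := by omega
    have : x = a - 1 := by rw [hxj, hj2, cast_last]; ring
    exact hx (this ▸ ha1)
  have hrm : r ≤ m + 1 := le_trans hjr hjm
  -- end-of-run membership facts
  have hrcast : (a + ((r-1:ℕ) : Fin (m+3))) + 1 = a + (r : Fin (m+3)) := by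
    rw [cast_pred (by omega : 1 ≤ r)]; ring
  have hendB : a + (r : Fin (m+3)) ∉ B ∧ a + (r : Fin (m+3)) + 1 ∈ B := by
    have := F0r (hrun (r-1) (by omega)) (by rw [hrcast]; exact hrend)
    rwa [hrcast] at this
  refine ⟨a + (r : Fin (m+3)), hendB.1, fun w => ?_⟩
  by_cases hwa : Win w a
  · -- use v := x
    refine ⟨x, hx, ?_, ?_⟩
    · rintro (h | h | h)
      · refine hxr (r-1) (by omega) ?_
        rw [h, cast_pred (by omega : 1 ≤ r)]; ring
      · exact hx (h ▸ hrend)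
      · exact not_mem_of_undom hx (h ▸ hendB.2)
    · intro hwx
      -- helper contradictions
      have hj0 : ∀ c : ℕ, ((j:ℕ) : Fin (m+3)) = (c : Fin (m+3)) → c < 2 → False := by
        intro c hc hc2
        have := fin_cast_inj hjlt (by omega) hc
        omega
      have hj2case : ((j:ℕ) : Fin (m+3)) = ((2:ℕ) : Fin (m+3)) → False := by
        intro hc
        have hj2 : j = 2 := fin_cast_inj hjlt (by omega) hc
        have hr2' : r = 2 := by omega
        apply hx
        rw [hxj, hj2]
        rw [hr2'] at hrend
        exact_mod_cast hrend
      have hjn1 : ((j+1:ℕ) : Fin (m+3)) = ((0:ℕ) : Fin (m+3)) → False := by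
        intro hc
        have := fin_cast_inj (by omega) (by omega) hc
        omega
      have hjn2 : ((j+2:ℕ) : Fin (m+3)) = ((0:ℕ) : Fin (m+3)) → False := by
        intro hc
        by_cases hj : j = m + 1
        · -- x = a - 2 : flank argument
          have hxa : x = a - 2 := by
            rw [hxj, hj]
            have : ((m+1 : ℕ) : Fin (m+3)) = -2 := by
              have := cast_last (m := m)
              rw [show ((m+2:ℕ) : Fin (m+3)) = ((m+1:ℕ) : Fin (m+3)) + 1 by
                rw [← Nat.cast_add_one]] at this
              linear_combination this
            rw [this]; ring
          have hD1 : Dom B (x + 1) := by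
            have : x + 1 = a - 1 := by rw [hxa]; ring
            rwa [this]
          have hmem := (F0r hx hD1).2
          have : x + 1 + 1 = a := by rw [hxa]; ring
          rw [this] at hmem
          exact (not_mem_of_undom hba) hmem
        · have := fin_cast_inj (by omega) (by omega) hc
          omega
      rcases hwa with h1 | h1 | h1 <;> rcases hwx with h2 | h2 | h2
      · exact hj0 0 (by push_cast; linear_combination h2 - h1 - hxj) (by omega)
      · exact hj0 1 (by push_cast; linear_combination h2 - h1 - hxj) (by omega)
      · exact hj2case (by push_cast; linear_combination h2 - h1 - hxj)
      · exact hjn1 (by push_cast; linear_combination h2 - h1 - hxj)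
      · exact hj0 0 (by push_cast; linear_combination h2 - h1 - hxj) (by omega)
      · exact hj0 1 (by push_cast; linear_combination h2 - h1 - hxj) (by omega)
      · exact hjn2 (by push_cast; linear_combination h2 - h1 - hxj)
      · exact hjn1 (by push_cast; linear_combination h2 - h1 - hxj)
      · exact hj0 0 (by push_cast; linear_combination h2 - h1 - hxj) (by omega)
  · -- use v := a
    refine ⟨a, hba, ?_, hwa⟩
    rintro (h | h | h)
    · rw [cast_pred (by omega : 1 ≤ r)] at h
      have hc : ((r-1:ℕ) : Fin (m+3)) = ((0:ℕ) : Fin (m+3)) := by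
        push_cast
        linear_combination -h
      have := fin_cast_inj (by omega) (by omega) hc
      omega
    · have hc : ((r:ℕ) : Fin (m+3)) = ((0:ℕ) : Fin (m+3)) := by
        push_cast
        linear_combination -h
      have := fin_cast_inj (by omega) (by omega) hc
      omega
    · have hc : ((r+1:ℕ) : Fin (m+3)) = ((0:ℕ) : Fin (m+3)) := by
        push_cast
        linear_combination -h
      have := fin_cast_inj (by omega) (by omega) hc
      omega

lemma key (B : Finset (Fin (m+3))) (hB : B.Nonempty) (hU : Odd (m+3 - B.card))
    (hnw : ¬ ∃ w, ∀ v, ¬ Dom B v → Win w v) :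
    ∃ u, u ∉ B ∧ ∀ w, ∃ v, ¬ Dom B v ∧ ¬ Win u v ∧ ¬ Win w v := by
  classical
  by_cases hdead : ∃ u, u ∉ B ∧ ∀ v, ¬ Dom B v → ¬ Win u v
  · obtain ⟨u, huB, hu⟩ := hdead
    refine ⟨u, huB, fun w => ?_⟩
    have hnw' := hnw
    push_neg at hnw'
    obtain ⟨v, hv, hwv⟩ := hnw' w
    exact ⟨v, hv, hu v hv, hwv⟩
  push_neg at hdead
  have hstep2 : ∀ u, u ∉ B → ∃ v, ¬ Dom B v ∧ Win u v := hdead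
  by_cases hsingle : ∃ (a : Fin (m+3)) (r : ℕ), (¬ Dom B a ∧ Dom B (a-1)) ∧
      (∀ j, j < r → ¬ Dom B (a + (j : Fin (m+3)))) ∧ Dom B (a + (r : Fin (m+3))) ∧
      (∀ v, ¬ Dom B v → ∃ j, j < r ∧ v = a + (j : Fin (m+3)))
  · obtain ⟨a, r, ⟨ha, ha1⟩, hrun, hrend, hcov⟩ := hsingle
    exact case2 B hB hU hnw hstep2 a r ha ha1 hrun hrend hcov
  · push_neg at hsingle
    by_cases hcons : ∃ y, ¬ Dom B y ∧ ¬ Dom B (y+1)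
    · obtain ⟨y, hy1, hy2⟩ := hcons
      apply case1a B hB y hy1 hy2
      intro a r ha ha1 hrun hrend
      have h := hsingle a r ⟨ha, ha1⟩ hrun hrend
      exact h
    · push_neg at hcons
      exact case1b B hU hnw hstep2 hcons

lemma main : ∀ (fuel : ℕ) (B : Finset (Fin (m+3))), B.Nonempty → (∃ v, ¬ Dom B v) →
    m + 3 - B.card ≤ fuel →
    (NWinsAux (SimpleGraph.cycleGraph (m+3)) fuel B ↔
      (Odd (m+3 - B.card) ∨ ∃ w, ∀ v, ¬ Dom B v → Win w v)) := by
  intro fuel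
  induction fuel with
  | zero =>
    intro B hB hex hle
    obtain ⟨v, hv⟩ := hex
    have hne : B ≠ Finset.univ := by
      intro h
      exact not_mem_of_undom hv (h ▸ Finset.mem_univ v)
    have : B.card < m + 3 := by
      have := (Finset.card_lt_iff_ne_univ _).mpr hne
      rwa [Fintype.card_fin] at this
    omega
  | succ fuel ih =>
    intro B hB hex hle
    have hBcard : B.card < m + 3 := by
      obtain ⟨v, hv⟩ := hex
      have hne : B ≠ Finset.univ := by
        intro h
        exact not_mem_of_undom hv (h ▸ Finset.mem_univ v)
      have := (Finset.card_lt_iff_ne_univ _).mpr hne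
      rwa [Fintype.card_fin] at this
    have hnd : ¬ IsDomSet (SimpleGraph.cycleGraph (m+3)) B := by
      intro h
      rw [isDomSet_iff] at h
      obtain ⟨v, hv⟩ := hex
      exact hv (h v)
    show (¬ IsDomSet (SimpleGraph.cycleGraph (m+3)) B ∧
      ∃ u, u ∉ B ∧ (IsDomSet (SimpleGraph.cycleGraph (m+3)) (insert u B) ∨
        ¬ NWinsAux (SimpleGraph.cycleGraph (m+3)) fuel (insert u B))) ↔ _
    constructor
    · rintro ⟨-, u, huB, hu⟩
      by_contra hnp
      push_neg at hnp
      obtain ⟨hodd, hnw⟩ := hnp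
      have hnw' := hnw
      obtain ⟨v, hv, hwv⟩ := hnw' u
      have hvins : ¬ Dom (insert u B) v := by rw [dom_insert]; tauto
      have hins_card : (insert u B).card = B.card + 1 := Finset.card_insert_of_notMem huB
      rcases hu with hdom | hnwin
      · rw [isDomSet_iff] at hdom
        exact hvins (hdom v)
      · apply hnwin
        rw [ih (insert u B) ⟨u, Finset.mem_insert_self u B⟩ ⟨v, hvins⟩
          (by rw [hins_card]; omega)]
        left
        rw [hins_card]
        have hEven : Even (m+3 - B.card) := Nat.not_odd_iff_even.mp hodd
        have hOdd1 := Nat.Even.sub_odd (by omega : 1 ≤ m+3-B.card) hEven odd_one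
        have heq : m + 3 - (B.card + 1) = (m+3 - B.card) - 1 := by omega
        rwa [heq]
    · intro hp
      refine ⟨hnd, ?_⟩
      by_cases hwin : ∃ w, ∀ v, ¬ Dom B v → Win w v
      · obtain ⟨w, hw⟩ := hwin
        obtain ⟨v₀, hv₀⟩ := hex
        have hwB : w ∉ B := by
          intro hwB
          rcases hw v₀ hv₀ with h | h | h
          · exact hv₀ (Or.inr (Or.inr (by rw [h, sub_add_cancel]; exact hwB)))
          · exact hv₀ (Or.inl (h ▸ hwB))
          · exact hv₀ (Or.inr (Or.inl (by rw [h, add_sub_cancel_right]; exact hwB)))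
        refine ⟨w, hwB, Or.inl ?_⟩
        rw [isDomSet_iff]
        intro v
        rw [dom_insert]
        by_cases hd : Dom B v
        · exact Or.inl hd
        · exact Or.inr (hw v hd)
      · have hodd : Odd (m+3-B.card) := hp.resolve_right hwin
        obtain ⟨u, huB, hu⟩ := key B hB hodd hwin
        refine ⟨u, huB, Or.inr ?_⟩
        obtain ⟨v₁, hv₁, hv₁u, -⟩ := hu u
        have hv₁ins : ¬ Dom (insert u B) v₁ := by rw [dom_insert]; tauto
        rw [ih (insert u B) ⟨u, Finset.mem_insert_self u B⟩ ⟨v₁, hv₁ins⟩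
          (by rw [Finset.card_insert_of_notMem huB]; omega)]
        push_neg
        constructor
        · rw [Finset.card_insert_of_notMem huB]
          have heq : m + 3 - (B.card + 1) = (m+3 - B.card) - 1 := by omega
          rw [heq, Nat.not_odd_iff_even]
          exact Nat.Odd.sub_odd hodd odd_one
        · intro w
          obtain ⟨v, hv, hvu, hvw⟩ := hu w
          exact ⟨v, by rw [dom_insert]; tauto, hvw⟩

end CycleSnooker
namespace CycleSnooker
open Fin.CommRing

lemma undom_singleton {u v : Fin (m+3)} (h : ¬ Win u v) : ¬ Dom {u} v := by
  intro hd
  apply h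
  rcases hd with h' | h' | h'
  · rw [Finset.mem_singleton] at h'; exact Or.inr (Or.inl h')
  · rw [Finset.mem_singleton] at h'; exact Or.inr (Or.inr (by linear_combination h'))
  · rw [Finset.mem_singleton] at h'; exact Or.inl (by linear_combination h')

lemma win_singleton {u v : Fin (m+3)} (h : Dom ({u} : Finset (Fin (m+3))) v) : Win u v := by
  rcases h with h' | h' | h'
  · rw [Finset.mem_singleton] at h'; exact Or.inr (Or.inl h')
  · rw [Finset.mem_singleton] at h'; exact Or.inr (Or.inr (by linear_combination h'))
  · rw [Finset.mem_singleton] at h'; exact Or.inl (by linear_combination h')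

lemma not_win_shift {u : Fin (m+3)} {c : ℕ} (hc1 : 2 ≤ c) (hc2 : c + 1 < m + 3) :
    ¬ Win u (u + (c : Fin (m+3))) := by
  rintro (h | h | h)
  · exact nc_ne (m := m) (i := c+1) (j := 0) (by omega) (by omega) (by omega)
      (by push_cast at h ⊢; linear_combination h)
  · exact nc_ne (m := m) (i := c) (j := 0) (by omega) (by omega) (by omega)
      (by push_cast at h ⊢; linear_combination h)
  · exact nc_ne (m := m) (i := c) (j := 1) (by omega) (by omega) (by omega)
      (by push_cast at h ⊢; linear_combination h)

lemma singleton_cover_iff (u : Fin (m+3)) (hm : 1 ≤ m) :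
    (∃ w, ∀ v, ¬ Dom ({u} : Finset (Fin (m+3))) v → Win w v) ↔ m ≤ 3 := by
  constructor
  · intro ⟨w, hw⟩
    by_contra hc
    push_neg at hc
    have hm4 : 4 ≤ m := hc
    have h2 : ¬ Dom ({u} : Finset (Fin (m+3))) (u + ((2:ℕ) : Fin (m+3))) :=
      undom_singleton (not_win_shift (by omega) (by omega))
    have h5 : ¬ Dom ({u} : Finset (Fin (m+3))) (u + ((5:ℕ) : Fin (m+3))) :=
      undom_singleton (not_win_shift (by omega) (by omega))
    have hw2 := hw _ h2
    have hw5 := hw _ h5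
    rcases hw2 with h1 | h1 | h1 <;> rcases hw5 with h2' | h2' | h2'
    · exact nc_ne (m := m) (i := 5) (j := 2) (by omega) (by omega) (by omega)
        (by push_cast at h1 h2' ⊢; linear_combination h2' - h1)
    · exact nc_ne (m := m) (i := 5) (j := 3) (by omega) (by omega) (by omega)
        (by push_cast at h1 h2' ⊢; linear_combination h2' - h1)
    · exact nc_ne (m := m) (i := 5) (j := 4) (by omega) (by omega) (by omega)
        (by push_cast at h1 h2' ⊢; linear_combination h2' - h1)
    · exact nc_ne (m := m) (i := 5) (j := 1) (by omega) (by omega) (by omega)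
        (by push_cast at h1 h2' ⊢; linear_combination h2' - h1)
    · exact nc_ne (m := m) (i := 5) (j := 2) (by omega) (by omega) (by omega)
        (by push_cast at h1 h2' ⊢; linear_combination h2' - h1)
    · exact nc_ne (m := m) (i := 5) (j := 3) (by omega) (by omega) (by omega)
        (by push_cast at h1 h2' ⊢; linear_combination h2' - h1)
    · exact nc_ne (m := m) (i := 5) (j := 0) (by omega) (by omega) (by omega)
        (by push_cast at h1 h2' ⊢; linear_combination h2' - h1)
    · exact nc_ne (m := m) (i := 5) (j := 1) (by omega) (by omega) (by omega)
        (by push_cast at h1 h2' ⊢; linear_combination h2' - h1)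
    · exact nc_ne (m := m) (i := 5) (j := 2) (by omega) (by omega) (by omega)
        (by push_cast at h1 h2' ⊢; linear_combination h2' - h1)
  · intro hm3
    refine ⟨u + ((3:ℕ) : Fin (m+3)), fun v hv => ?_⟩
    obtain ⟨k, hklt, hvk⟩ : ∃ k, k < m + 3 ∧ v = u + (k : Fin (m+3)) :=
      ⟨(v - u).val, (v - u).isLt, by rw [Fin.cast_val_eq_self]; ring⟩
    have hk0 : k ≠ 0 := by
      rintro rfl
      simp only [Nat.cast_zero, add_zero] at hvk
      exact hv (Or.inl (by rw [hvk]; exact Finset.mem_singleton_self u))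
    have hk1 : k ≠ 1 := by
      rintro rfl
      apply hv
      right; left
      rw [Finset.mem_singleton, hvk]
      push_cast
      ring
    have hkm2 : k ≠ m + 2 := by
      rintro rfl
      apply hv
      right; right
      rw [Finset.mem_singleton, hvk, cast_last]
      ring
    have hk234 : k = 2 ∨ k = 3 ∨ k = 4 := by omega
    rcases hk234 with rfl | rfl | rfl
    · left; rw [hvk]; push_cast; ring
    · right; left; rw [hvk]
    · right; right; rw [hvk]; push_cast; ring

end CycleSnooker

open CycleSnooker
open Fin.CommRing

/-- For `n ≥ 3`, the first player wins the snooker domination game on the cycle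
`C_n` iff `n` is odd and `n ≠ 5`. -/
theorem cycle_firstPlayerWins (n : ℕ) (hn : 3 ≤ n) :
    FirstPlayerWins (SimpleGraph.cycleGraph n) ↔ (Odd n ∧ n ≠ 5) := by
  obtain ⟨m, rfl⟩ : ∃ m, n = m + 3 := ⟨n - 3, by omega⟩
  clear hn
  have hunfold : FirstPlayerWins (SimpleGraph.cycleGraph (m+3)) ↔
      (¬ IsDomSet (SimpleGraph.cycleGraph (m+3)) ∅ ∧
        ∃ u, u ∉ (∅ : Finset (Fin (m+3))) ∧
          (IsDomSet (SimpleGraph.cycleGraph (m+3)) (insert u ∅) ∨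
            ¬ NWinsAux (SimpleGraph.cycleGraph (m+3)) (m+2) (insert u ∅))) := by
    unfold FirstPlayerWins
    rw [Fintype.card_fin]
    exact Iff.rfl
  rw [hunfold]
  have hnd0 : ¬ IsDomSet (SimpleGraph.cycleGraph (m+3)) ∅ := by
    intro h
    rw [isDomSet_iff] at h
    rcases h 0 with h' | h' | h' <;> exact Finset.notMem_empty _ h'
  rcases Nat.eq_zero_or_pos m with rfl | hm
  · -- n = 3
    apply iff_of_true
    · refine ⟨hnd0, 0, Finset.notMem_empty 0, Or.inl ?_⟩
      rw [isDomSet_iff]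
      intro v
      fin_cases v <;> simp [Dom]
    · exact ⟨by decide, by decide⟩
  · -- n ≥ 4
    have hsingval : ∀ u : Fin (m+3),
        (IsDomSet (SimpleGraph.cycleGraph (m+3)) (insert u ∅) ∨
          ¬ NWinsAux (SimpleGraph.cycleGraph (m+3)) (m+2) (insert u ∅)) ↔
        (¬ Odd (m+2) ∧ 4 ≤ m) := by
      intro u
      rw [show (insert u ∅ : Finset (Fin (m+3))) = {u} from rfl]
      have hund2 : ¬ Dom ({u} : Finset (Fin (m+3))) (u + ((2:ℕ) : Fin (m+3))) :=
        undom_singleton (not_win_shift (by omega) (by omega))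
      have hndom : ¬ IsDomSet (SimpleGraph.cycleGraph (m+3)) ({u} : Finset (Fin (m+3))) := by
        intro h
        rw [isDomSet_iff] at h
        exact hund2 (h _)
      have hmain := main (m := m) (m+2) {u} ⟨u, Finset.mem_singleton_self u⟩
        ⟨_, hund2⟩ (by rw [Finset.card_singleton]; omega)
      rw [Finset.card_singleton] at hmain
      constructor
      · rintro (h | h)
        · exact absurd h hndom
        · rw [hmain] at h
          push_neg at h
          obtain ⟨h1, h2⟩ := h
          have h3 : ¬ (m ≤ 3) := by
            intro h4
            obtain ⟨w, hw⟩ := (singleton_cover_iff u hm).mpr h4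
            obtain ⟨v, hv, hwv⟩ := h2 w
            exact hwv (hw v hv)
          have : m + 3 - 1 = m + 2 := by omega
          rw [this] at h1
          exact ⟨h1, by omega⟩
      · rintro ⟨h1, h2⟩
        right
        rw [hmain]
        push_neg
        constructor
        · have : m + 3 - 1 = m + 2 := by omega
          rw [this]
          exact h1
        · intro w
          by_contra hc
          push_neg at hc
          have := (singleton_cover_iff u hm).mp ⟨w, hc⟩
          omega
    constructor
    · rintro ⟨-, u, -, hu⟩
      rw [hsingval u] at hu
      obtain ⟨h1, h2⟩ := hu
      have hEven : Even (m+2) := Nat.not_odd_iff_even.mp h1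
      constructor
      · rcases hEven with ⟨k, hk⟩
        exact ⟨k, by omega⟩
      · omega
    · rintro ⟨hodd, hne5⟩
      refine ⟨hnd0, 0, Finset.notMem_empty 0, ?_⟩
      rw [hsingval 0]
      obtain ⟨k, hk⟩ := hodd
      constructor
      · rw [Nat.not_odd_iff_even]
        exact ⟨k, by omega⟩
      · omega
end

section
/- If A and B are isomorphic snooker domination games (on disjoint isomorphic graphs with corresponding positions), then A ⊕ B is a P-position: the second player wins by mirroring each move of the first player across the isomorphism. -/
/-- Next player wins the snooker domination game on `G` starting from the
position with chosen set `B`. -/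
def NWinsFrom {V : Type*} [Fintype V] [DecidableEq V] (G : SimpleGraph V)
    (B : Finset V) : Prop :=
  NWinsAux G (Fintype.card V) B

/-- The position with chosen set `B` is a P-position: the player not about to
move wins. -/
def PPosition {V : Type*} [Fintype V] [DecidableEq V] (G : SimpleGraph V)
    (B : Finset V) : Prop :=
  ¬ NWinsFrom G B

/-- The shaded vertices of the position with chosen set `B`: unchosen vertices
dominated by `B`. -/
def shadedSet {V : Type*} (G : SimpleGraph V) (B : Finset V) : Set V :=
  {v | v ∉ B ∧ ∃ u ∈ B, G.Adj u v}

set_option linter.unusedSectionVars false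

namespace SnookerAux

variable {α β : Type*} [DecidableEq α] [DecidableEq β]

def sumSet (BA : Finset α) (BB : Finset β) : Finset (α ⊕ β) :=
  BA.map Function.Embedding.inl ∪ BB.map Function.Embedding.inr

@[simp] lemma mem_sumSet_inl {BA : Finset α} {BB : Finset β} {a : α} :
    Sum.inl a ∈ sumSet BA BB ↔ a ∈ BA := by simp [sumSet]

@[simp] lemma mem_sumSet_inr {BA : Finset α} {BB : Finset β} {b : β} :
    Sum.inr b ∈ sumSet BA BB ↔ b ∈ BB := by simp [sumSet]

lemma insert_inl {BA : Finset α} {BB : Finset β} (a : α) :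
    insert (Sum.inl a : α ⊕ β) (sumSet BA BB) = sumSet (insert a BA) BB := by
  ext u; cases u <;> simp [Finset.mem_insert]

lemma insert_inr {BA : Finset α} {BB : Finset β} (b : β) :
    insert (Sum.inr b : α ⊕ β) (sumSet BA BB) = sumSet BA (insert b BB) := by
  ext u; cases u <;> simp [Finset.mem_insert]

lemma isDomSet_sum {GA : SimpleGraph α} {GB : SimpleGraph β} {BA : Finset α} {BB : Finset β} :
    IsDomSet (GA.sum GB) (sumSet BA BB) ↔ IsDomSet GA BA ∧ IsDomSet GB BB := by
  constructor
  · intro h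
    constructor
    · intro v
      rcases h (Sum.inl v) with hv | ⟨u, hu, hadj⟩
      · exact Or.inl (by simpa using hv)
      · cases u with
        | inl u => exact Or.inr ⟨u, by simpa using hu, hadj⟩
        | inr u => exact absurd hadj (by simp)
    · intro v
      rcases h (Sum.inr v) with hv | ⟨u, hu, hadj⟩
      · exact Or.inl (by simpa using hv)
      · cases u with
        | inl u => exact absurd hadj (by simp)
        | inr u => exact Or.inr ⟨u, by simpa using hu, hadj⟩
  · rintro ⟨hA, hB⟩ v
    cases v with
    | inl v =>
      rcases hA v with hv | ⟨u, hu, hadj⟩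
      · exact Or.inl (by simpa using hv)
      · exact Or.inr ⟨Sum.inl u, by simpa using hu, hadj⟩
    | inr v =>
      rcases hB v with hv | ⟨u, hu, hadj⟩
      · exact Or.inl (by simpa using hv)
      · exact Or.inr ⟨Sum.inr u, by simpa using hu, hadj⟩

def GoodIso (GA : SimpleGraph α) (GB : SimpleGraph β) (BA : Finset α) (BB : Finset β) : Prop :=
  ∃ e : (GA.induce {v | v ∉ BA}) ≃g (GB.induce {v | v ∉ BB}),
    ∀ v : {v : α // v ∉ BA}, (v : α) ∈ shadedSet GA BA ↔ ((e v : β) ∈ shadedSet GB BB)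

lemma GoodIso.symm {GA : SimpleGraph α} {GB : SimpleGraph β} {BA : Finset α} {BB : Finset β}
    (h : GoodIso GA GB BA BB) : GoodIso GB GA BB BA := by
  obtain ⟨e, he⟩ := h
  refine ⟨e.symm, fun w => ?_⟩
  have h := he (e.symm w)
  rw [RelIso.apply_symm_apply] at h
  exact h.symm

lemma isDomSet_iff_shaded {V : Type*} (G : SimpleGraph V) (B : Finset V) :
    IsDomSet G B ↔ ∀ v : {v : V // v ∉ B}, (v : V) ∈ shadedSet G B := by
  constructor
  · intro h v
    rcases h v with hv | hu
    · exact absurd hv v.2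
    · exact ⟨v.2, hu⟩
  · intro h v
    by_cases hv : v ∈ B
    · exact Or.inl hv
    · exact Or.inr (h ⟨v, hv⟩).2

lemma GoodIso.dom_of_dom {GA : SimpleGraph α} {GB : SimpleGraph β} {BA : Finset α}
    {BB : Finset β} (h : GoodIso GA GB BA BB) (hA : IsDomSet GA BA) : IsDomSet GB BB := by
  obtain ⟨e, he⟩ := h
  rw [isDomSet_iff_shaded] at hA ⊢
  intro w
  have h := (he (e.symm w)).mp (hA _)
  rwa [RelIso.apply_symm_apply] at h

lemma GoodIso.dom_iff {GA : SimpleGraph α} {GB : SimpleGraph β} {BA : Finset α}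
    {BB : Finset β} (h : GoodIso GA GB BA BB) : IsDomSet GA BA ↔ IsDomSet GB BB :=
  ⟨h.dom_of_dom, h.symm.dom_of_dom⟩

lemma goodIso_insert {GA : SimpleGraph α} {GB : SimpleGraph β} {BA : Finset α} {BB : Finset β}
    (e : (GA.induce {v | v ∉ BA}) ≃g (GB.induce {v | v ∉ BB}))
    (he : ∀ v : {v : α // v ∉ BA}, (v : α) ∈ shadedSet GA BA ↔ ((e v : β) ∈ shadedSet GB BB))
    {a : α} (ha : a ∉ BA) :
    GoodIso GA GB (insert a BA) (insert (↑(e ⟨a, ha⟩)) BB) := by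
  set ea : {v : β // v ∉ BB} := e ⟨a, ha⟩ with hea
  have hmemA : ∀ v : {v : α // v ∉ (insert a BA : Finset α)}, (v : α) ∉ BA ∧ (v : α) ≠ a := by
    intro v
    have := v.2
    simp only [Set.mem_setOf_eq, Finset.mem_insert, not_or] at this
    exact ⟨this.2, this.1⟩
  have hmemB : ∀ w : {v : β // v ∉ (insert (↑ea) BB : Finset β)}, (w : β) ∉ BB ∧ (w : β) ≠ ↑ea := by
    intro w
    have := w.2
    simp only [Set.mem_setOf_eq, Finset.mem_insert, not_or] at this
    exact ⟨this.2, this.1⟩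
  have einj : Function.Injective e := e.injective
  refine ⟨⟨⟨fun v => ⟨(e ⟨(v : α), (hmemA v).1⟩ : β), ?_⟩,
      fun w => ⟨(e.symm ⟨(w : β), (hmemB w).1⟩ : α), ?_⟩, ?_, ?_⟩, ?_⟩, ?_⟩
  · -- f maps into the right set
    intro hmem
    rcases Finset.mem_insert.mp hmem with heq | hmem'
    · have : (⟨(v : α), (hmemA v).1⟩ : {v : α // v ∉ BA}) = ⟨a, ha⟩ := einj (Subtype.ext heq)
      exact (hmemA v).2 (congrArg Subtype.val this)
    · exact (e ⟨(v : α), (hmemA v).1⟩).2 hmem'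
  · -- g maps into the right set
    intro hmem
    rcases Finset.mem_insert.mp hmem with heq | hmem'
    · have : (⟨(w : β), (hmemB w).1⟩ : {v : β // v ∉ BB}) = ea := by
        apply e.symm.injective
        apply Subtype.ext
        simpa [hea] using heq
      exact (hmemB w).2 (congrArg Subtype.val this)
    · exact (e.symm ⟨(w : β), (hmemB w).1⟩).2 hmem'
  · -- left inv
    intro v
    apply Subtype.ext
    show ((e.symm ⟨(e ⟨(v : α), _⟩ : β), _⟩ : {v : α // v ∉ BA}) : α) = (v : α)
    rw [show (⟨(e ⟨(v : α), (hmemA v).1⟩ : β), _⟩ : {v : β // v ∉ BB})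
        = e ⟨(v : α), (hmemA v).1⟩ from rfl, RelIso.symm_apply_apply]
  · -- right inv
    intro w
    apply Subtype.ext
    show ((e ⟨(e.symm ⟨(w : β), _⟩ : α), _⟩ : {v : β // v ∉ BB}) : β) = (w : β)
    rw [show (⟨(e.symm ⟨(w : β), (hmemB w).1⟩ : α), _⟩ : {v : α // v ∉ BA})
        = e.symm ⟨(w : β), (hmemB w).1⟩ from rfl, RelIso.apply_symm_apply]
  · -- map_rel_iff
    intro u v
    exact e.map_rel_iff (a := ⟨(u : α), (hmemA u).1⟩) (b := ⟨(v : α), (hmemA v).1⟩)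
  · -- shaded condition
    intro v
    have hshadeA : (∃ u ∈ BA, GA.Adj u (v : α)) ↔
        (∃ u ∈ BB, GB.Adj u ↑(e ⟨(v : α), (hmemA v).1⟩)) := by
      constructor
      · intro h
        exact ((he ⟨(v : α), (hmemA v).1⟩).mp ⟨(hmemA v).1, h⟩).2
      · intro h
        exact ((he ⟨(v : α), (hmemA v).1⟩).mpr ⟨(e ⟨(v : α), (hmemA v).1⟩).2, h⟩).2
    have hadj : GA.Adj a (v : α) ↔ GB.Adj ↑ea ↑(e ⟨(v : α), (hmemA v).1⟩) :=
      (e.map_rel_iff (a := ⟨a, ha⟩) (b := ⟨(v : α), (hmemA v).1⟩)).symm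
    constructor
    · rintro ⟨-, u, hu, hadju⟩
      refine ⟨?_, ?_⟩
      · exact fun hm => (Finset.mem_insert.mp hm).elim
          (fun h => (hmemB ⟨_, by
            intro hmem
            rcases Finset.mem_insert.mp hmem with heq | hmem'
            · have : (⟨(v : α), (hmemA v).1⟩ : {v : α // v ∉ BA}) = ⟨a, ha⟩ :=
                einj (Subtype.ext heq)
              exact (hmemA v).2 (congrArg Subtype.val this)
            · exact (e ⟨(v : α), (hmemA v).1⟩).2 hmem'⟩).2 h)
          (fun h => (e ⟨(v : α), (hmemA v).1⟩).2 h)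
      · rcases Finset.mem_insert.mp hu with rfl | hu'
        · exact ⟨↑ea, Finset.mem_insert_self _ _, hadj.mp hadju⟩
        · obtain ⟨w', hw', hadjw'⟩ := hshadeA.mp ⟨u, hu', hadju⟩
          exact ⟨w', Finset.mem_insert_of_mem hw', hadjw'⟩
    · rintro ⟨-, w', hw', hadjw'⟩
      refine ⟨v.2, ?_⟩
      rcases Finset.mem_insert.mp hw' with rfl | hw''
      · exact ⟨a, Finset.mem_insert_self _ _, hadj.mpr hadjw'⟩
      · obtain ⟨u, hu, hadju⟩ := hshadeA.mpr ⟨w', hw'', hadjw'⟩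
        exact ⟨u, Finset.mem_insert_of_mem hu, hadju⟩

lemma main [Fintype α] [Fintype β] {GA : SimpleGraph α} {GB : SimpleGraph β} :
    ∀ fuel (BA : Finset α) (BB : Finset β), GoodIso GA GB BA BB →
      Fintype.card α + Fintype.card β ≤ fuel + (BA.card + BB.card) →
      ¬ NWinsAux (GA.sum GB) fuel (sumSet BA BB) := by
  intro fuel
  induction fuel using Nat.strong_induction_on with
  | _ fuel IH =>
  intro BA BB hiso hcard hwin
  cases fuel with
  | zero => exact hwin
  | succ f =>
    obtain ⟨hnd, u, hu, hmove⟩ := hwin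
    have hdAB := hiso.dom_iff
    have hndA : ¬ IsDomSet GA BA := fun h => hnd (isDomSet_sum.mpr ⟨h, hdAB.mp h⟩)
    have hndB : ¬ IsDomSet GB BB := fun h => hnd (isDomSet_sum.mpr ⟨hdAB.mpr h, h⟩)
    obtain ⟨e, he⟩ := hiso
    cases u with
    | inl a =>
      have ha : a ∉ BA := by simpa using hu
      set w : {v : β // v ∉ BB} := e ⟨a, ha⟩ with hw
      have hwB : (w : β) ∉ BB := w.2
      have h1 : BA.card + 1 ≤ Fintype.card α := by
        rw [← Finset.card_insert_of_notMem ha, ← Finset.card_univ]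
        exact Finset.card_le_univ _
      have h2 : BB.card + 1 ≤ Fintype.card β := by
        rw [← Finset.card_insert_of_notMem hwB, ← Finset.card_univ]
        exact Finset.card_le_univ _
      obtain ⟨f', rfl⟩ : ∃ f', f = f' + 1 := ⟨f - 1, by omega⟩
      rw [insert_inl] at hmove
      rcases hmove with hdom | hnw
      · exact hndB (isDomSet_sum.mp hdom).2
      · apply hnw
        refine ⟨fun h => hndB (isDomSet_sum.mp h).2, Sum.inr ↑w, by simpa using hwB, Or.inr ?_⟩
        rw [insert_inr]
        exact IH f' (by omega) _ _ (goodIso_insert e he ha)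
          (by rw [Finset.card_insert_of_notMem ha, Finset.card_insert_of_notMem hwB]; omega)
    | inr b =>
      have hb : b ∉ BB := by simpa using hu
      have hiso' : GoodIso GB GA BB BA := GoodIso.symm ⟨e, he⟩
      obtain ⟨e', he'⟩ := hiso'
      set w : {v : α // v ∉ BA} := e' ⟨b, hb⟩ with hw
      have hwA : (w : α) ∉ BA := w.2
      have h1 : BA.card + 1 ≤ Fintype.card α := by
        rw [← Finset.card_insert_of_notMem hwA, ← Finset.card_univ]
        exact Finset.card_le_univ _
      have h2 : BB.card + 1 ≤ Fintype.card β := by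
        rw [← Finset.card_insert_of_notMem hb, ← Finset.card_univ]
        exact Finset.card_le_univ _
      obtain ⟨f', rfl⟩ : ∃ f', f = f' + 1 := ⟨f - 1, by omega⟩
      rw [insert_inr] at hmove
      rcases hmove with hdom | hnw
      · exact hndA (isDomSet_sum.mp hdom).1
      · apply hnw
        refine ⟨fun h => hndA (isDomSet_sum.mp h).1, Sum.inl ↑w, by simpa using hwA, Or.inr ?_⟩
        rw [insert_inl]
        exact IH f' (by omega) _ _ ((goodIso_insert e' he' hb).symm)
          (by rw [Finset.card_insert_of_notMem hb, Finset.card_insert_of_notMem hwA]; omega)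

end SnookerAux


/-- If positions `A` and `B` (on disjoint graphs) are isomorphic, then the game
sum `A ⊕ B` is a P-position: the second player wins (by mirroring across the
isomorphism). -/
theorem sum_of_isomorphic_is_PPosition {α β : Type*}
    [Fintype α] [DecidableEq α] [Fintype β] [DecidableEq β]
    (GA : SimpleGraph α) (GB : SimpleGraph β)
    (BA : Finset α) (BB : Finset β)
    (e : (GA.induce {v | v ∉ BA}) ≃g (GB.induce {v | v ∉ BB}))
    (he : ∀ v : {v : α // v ∉ BA},
      (v : α) ∈ shadedSet GA BA ↔ ((e v : β) ∈ shadedSet GB BB)) :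
    PPosition (GA.sum GB)
      (BA.map Function.Embedding.inl ∪ BB.map Function.Embedding.inr) := by
  intro hwin
  exact SnookerAux.main (Fintype.card (α ⊕ β)) BA BB ⟨e, he⟩
    (by rw [Fintype.card_sum]; omega) hwin
end
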